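/- Bol's identity: for r ∈ ℤ with r ≥ 2, every holomorphic function F on ℍ, and every g = [[a,b],[c,d]] ∈ SL₂(ℝ), one has ∂_z^{r-1}((cz+d)^{r-2} F(gz)) = (cz+d)^{-r} F^{(r-1)}(gz), i.e. ∂_z^{r-1}(F|_{2-r} g) = (∂_z^{r-1}F)|_r g. Consequently F ↦ c_r ∂_z^{r-1} F with c_r = i/(2(r-1)!) maps A_{2-r}(Γ,v) into A_r(Γ,v), with kernel consisting of the polynomials of degree ≤ r-2 that are automorphic (i.e., the constants when 2-r = 0 and v trivial, otherwise 0). -/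

import Mathlib

/-!
Differentiating the weight-`k` slash `(G|_k g)(z) = (cz+d)^(-k) G(gz)` once gives, by the chain
rule and `d(gz)/dz = (cz+d)^(-2)` (this is where `det g = 1` enters),
`(G|_k g)' = -k c · G|_{k+1} g + G'|_{k+2} g`.
Bol's identity `(G|_{1-n} g)^(n) = G^(n)|_{n+1} g` follows by strong induction on `n`: in
`(G|_{-n} g)^(n+1) = n c · (G|_{1-n} g)^(n) + (G'|_{2-n} g)^(n)` the first term is the
identity for `n`, and the second is the derivative of the identity for `n - 1` applied to `G'`;
the two `c`-terms cancel.
Applied to an automorphic `F` of weight `2 - r`, it makes `F^(r-1)` automorphic of weight `r`.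
If `F^(r-1) = 0`, then `F` is a polynomial which the translation `T` multiplies by the scalar
`v T`, so it is constant; a nonzero constant is automorphic of weight `2 - r` only if
`|cz + d|^(2-r)` is constant for some `c ≠ 0`, i.e. `r = 2`, and then `v = 1` on `Γ`.
-/

open Complex

noncomputable def mdenom (g : Matrix.SpecialLinearGroup (Fin 2) ℝ) (z : ℂ) : ℂ :=
  (g.1 1 0 : ℂ) * z + (g.1 1 1 : ℂ)

noncomputable def mact (g : Matrix.SpecialLinearGroup (Fin 2) ℝ) (z : ℂ) : ℂ :=
  ((g.1 0 0 : ℂ) * z + (g.1 0 1 : ℂ)) / mdenom g z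

local notation "ℍₒ" => UpperHalfPlane.upperHalfPlaneSet

noncomputable def mslash (k : ℤ) (g : Matrix.SpecialLinearGroup (Fin 2) ℝ) (F : ℂ → ℂ) :
    ℂ → ℂ :=
  fun z => mdenom g z ^ (-k) * F (mact g z)

section Moebius

variable (g : Matrix.SpecialLinearGroup (Fin 2) ℝ)

lemma det_fin_two_eq_one : g.1 0 0 * g.1 1 1 - g.1 0 1 * g.1 1 0 = 1 := by
  rw [← Matrix.det_fin_two, g.2]

lemma mdenom_ne_zero {z : ℂ} (hz : 0 < z.im) : mdenom g z ≠ 0 := by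
  intro h
  have hc : g.1 1 0 = 0 := by simpa [mdenom, hz.ne'] using congrArg im h
  have hd : g.1 1 1 = 0 := by simpa [mdenom, hc] using congrArg re h
  simpa [hc, hd] using det_fin_two_eq_one g

lemma im_mact (z : ℂ) : (mact g z).im = z.im / normSq (mdenom g z) := by
  rw [mact, div_im, div_sub_div_same]
  congr 1
  simp only [mdenom, add_re, add_im, mul_re, mul_im, ofReal_re, ofReal_im]
  linear_combination z.im * det_fin_two_eq_one g

lemma im_mact_pos {z : ℂ} (hz : 0 < z.im) : 0 < (mact g z).im := by
  rw [im_mact]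
  exact div_pos hz (normSq_pos.2 (mdenom_ne_zero g hz))

lemma hasDerivAt_mdenom (z : ℂ) : HasDerivAt (mdenom g) (g.1 1 0 : ℂ) z :=
  (((hasDerivAt_id' z).const_mul (g.1 1 0 : ℂ)).add_const _).congr_deriv (mul_one _)

lemma hasDerivAt_mact {z : ℂ} (hz : mdenom g z ≠ 0) :
    HasDerivAt (mact g) (mdenom g z ^ (-2 : ℤ)) z := by
  have hnum : HasDerivAt (fun w => (g.1 0 0 : ℂ) * w + g.1 0 1) (g.1 0 0 : ℂ) z :=
    (((hasDerivAt_id' z).const_mul (g.1 0 0 : ℂ)).add_const _).congr_deriv (mul_one _)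
  refine (hnum.div (hasDerivAt_mdenom g z) hz).congr_deriv ?_
  have hdet : (g.1 0 0 : ℂ) * g.1 1 1 - g.1 0 1 * g.1 1 0 = 1 := by
    exact_mod_cast det_fin_two_eq_one g
  rw [zpow_neg, zpow_ofNat, ← one_div]
  congr 1
  simp only [mdenom]
  linear_combination hdet

end Moebius

section Slash

variable (k : ℤ) (g : Matrix.SpecialLinearGroup (Fin 2) ℝ) {G : ℂ → ℂ}

lemma hasDerivAt_mslash {z : ℂ} (hz : 0 < z.im) (hG : DifferentiableAt ℂ G (mact g z)) :
    HasDerivAt (mslash k g G)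
      (-k * g.1 1 0 * mslash (k + 1) g G z + mslash (k + 2) g (deriv G) z) z := by
  have hj := mdenom_ne_zero g hz
  have hpow : HasDerivAt (fun w => mdenom g w ^ (-k))
      ((-k : ℤ) * mdenom g z ^ (-k - 1) * g.1 1 0) z :=
    (hasDerivAt_zpow (-k) _ (Or.inl hj)).comp z (hasDerivAt_mdenom g z)
  refine (hpow.mul (hG.hasDerivAt.comp z (hasDerivAt_mact g hj))).congr_deriv ?_
  rw [mslash, mslash, show -(k + 1) = -k - 1 by ring, show -(k + 2) = -k + -2 by ring,
    zpow_add₀ hj, Function.comp_apply]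
  push_cast
  ring

lemma DifferentiableOn.differentiableAt_mact (hG : DifferentiableOn ℂ G ℍₒ) {z : ℂ}
    (hz : 0 < z.im) : DifferentiableAt ℂ G (mact g z) :=
  hG.differentiableAt (UpperHalfPlane.isOpen_upperHalfPlaneSet.mem_nhds (im_mact_pos g hz))

lemma DifferentiableOn.mslash (hG : DifferentiableOn ℂ G ℍₒ) :
    DifferentiableOn ℂ (mslash k g G) ℍₒ := fun _ hz =>
  (hasDerivAt_mslash k g hz
    (hG.differentiableAt_mact g hz)).differentiableAt.differentiableWithinAt

lemma deriv_mslash (hG : DifferentiableOn ℂ G ℍₒ) :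
    Set.EqOn (deriv (mslash k g G))
      (fun z => -k * g.1 1 0 * mslash (k + 1) g G z + mslash (k + 2) g (deriv G) z) ℍₒ :=
  fun _ hz => (hasDerivAt_mslash k g hz (hG.differentiableAt_mact g hz)).deriv

end Slash

lemma DifferentiableOn.iteratedDeriv {s : Set ℂ} {f : ℂ → ℂ} (hf : DifferentiableOn ℂ f s)
    (hs : IsOpen s) (n : ℕ) : DifferentiableOn ℂ (iteratedDeriv n f) s := by
  induction n with
  | zero => simpa using hf
  | succ n ih => simpa only [iteratedDeriv_succ] using ih.deriv hs

theorem iteratedDeriv_mslash (n : ℕ) (g : Matrix.SpecialLinearGroup (Fin 2) ℝ) {G : ℂ → ℂ}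
    (hG : DifferentiableOn ℂ G ℍₒ) :
    Set.EqOn (iteratedDeriv n (mslash (1 - n) g G)) (mslash (n + 1) g (iteratedDeriv n G))
      ℍₒ := by
  have hU := UpperHalfPlane.isOpen_upperHalfPlaneSet
  induction n using Nat.strong_induction_on generalizing G with
  | _ n ih =>
  rcases n with _ | n
  · intro _ _
    simp [mslash]
  intro z hz
  have hderiv : Set.EqOn (deriv (mslash (1 - ↑(n + 1)) g G))
      (fun w => n * g.1 1 0 * mslash (1 - n) g G w + mslash (2 - n) g (deriv G) w) ℍₒ := by
    intro w hw
    rw [deriv_mslash _ g hG hw]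
    push_cast
    ring_nf
  have hsecond : iteratedDeriv n (mslash (2 - n) g (deriv G)) z =
      -n * g.1 1 0 * mslash (n + 1) g (iteratedDeriv n G) z +
        mslash (n + 2) g (iteratedDeriv (n + 1) G) z := by
    rcases n with _ | m
    · simp [mslash]
    rw [iteratedDeriv_succ, show (2 : ℤ) - ↑(m + 1) = 1 - m by push_cast; ring,
      Filter.EventuallyEq.deriv_eq
        ((ih m (by omega) (hG.deriv hU)).eventuallyEq_of_mem (hU.mem_nhds hz)),
      deriv_mslash _ g ((hG.deriv hU).iteratedDeriv hU m) hz, ← iteratedDeriv_succ',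
      ← iteratedDeriv_succ]
    push_cast
    ring_nf
  have hCD {f : ℂ → ℂ} (hf : DifferentiableOn ℂ f ℍₒ) : ContDiffAt ℂ n f z :=
    (hf.contDiffOn hU).contDiffAt (hU.mem_nhds hz)
  rw [iteratedDeriv_succ', hderiv.iteratedDeriv_of_isOpen hU n hz,
    iteratedDeriv_fun_add (hCD ((hG.mslash _ g).const_mul _)) (hCD ((hG.deriv hU).mslash _ g)),
    iteratedDeriv_const_mul_field, ih n (by omega) hG hz, hsecond]
  push_cast
  ring_nf

lemma iteratedDeriv_comp_mact_of_automorphic (n : ℕ) {γ : Matrix.SpecialLinearGroup (Fin 2) ℝ}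
    {u : ℂ} {F : ℂ → ℂ} (hF : DifferentiableOn ℂ F ℍₒ)
    (hauto : ∀ z ∈ ℍₒ, F (mact γ z) = u * mdenom γ z ^ (1 - n : ℤ) * F z)
    {z : ℂ} (hz : 0 < z.im) :
    iteratedDeriv n F (mact γ z) = u * mdenom γ z ^ (n + 1 : ℤ) * iteratedDeriv n F z := by
  have hslash : Set.EqOn (mslash (1 - n) γ F) (fun w => u * F w) ℍₒ := fun w hw => by
    rw [mslash, hauto w hw, zpow_neg]
    field_simp [zpow_ne_zero _ (mdenom_ne_zero γ hw)]
  have hbol := iteratedDeriv_mslash n γ hF hz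
  rw [hslash.iteratedDeriv_of_isOpen UpperHalfPlane.isOpen_upperHalfPlaneSet n hz,
    iteratedDeriv_const_mul_field, mslash, zpow_neg,
    eq_inv_mul_iff_mul_eq₀ (zpow_ne_zero _ (mdenom_ne_zero γ hz))] at hbol
  rw [← hbol]
  ring

lemma slope_eq_zero_of_periodic {F : ℂ → ℂ} {k b u : ℂ}
    (hF : ∀ z ∈ ℍₒ, F z = k * z + b)
    (hper : ∀ z ∈ ℍₒ, F (z + 1) = u * F z) : k = 0 := by
  have hI : I ∈ ℍₒ := by simp
  have hI1 : I + 1 ∈ ℍₒ := by simp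
  have h₁ := hper I hI
  have h₂ := hper (I + 1) hI1
  rw [hF _ hI, hF _ hI1] at h₁
  rw [hF _ hI1, hF _ (by simp)] at h₂
  -- `h₂ - h₁` is `k = u k`, and `h₁` is `k = (u - 1) (k I + b)`, so `k² = 0`
  exact pow_eq_zero_iff two_ne_zero |>.1
    (by linear_combination k * h₁ - (k * I + b) * (h₂ - h₁))

lemma exists_eq_const_of_iteratedDeriv_eq_zero_of_periodic (n : ℕ) {F : ℂ → ℂ} {u : ℂ}
    (hF : DifferentiableOn ℂ F ℍₒ) (hn : ∀ z ∈ ℍₒ, iteratedDeriv n F z = 0)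
    (hper : ∀ z ∈ ℍₒ, F (z + 1) = u * F z) : ∃ c, ∀ z ∈ ℍₒ, F z = c := by
  have hU := UpperHalfPlane.isOpen_upperHalfPlaneSet
  induction n generalizing F with
  | zero => exact ⟨0, by simpa using hn⟩
  | succ n ih =>
    have hper' : ∀ z ∈ ℍₒ, deriv F (z + 1) = u * deriv F z := fun z hz => by
      rw [← deriv_comp_add_const, ← deriv_const_mul_field]
      exact Filter.EventuallyEq.deriv_eq (Filter.eventuallyEq_of_mem (hU.mem_nhds hz) hper)
    obtain ⟨k, hk⟩ := ih (hF.deriv hU) (by simpa [iteratedDeriv_succ'] using hn) hper'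
    obtain ⟨b, hb⟩ := hU.exists_eq_add_of_deriv_eq (convex_halfSpace_im_gt 0).isPreconnected hF
      (differentiableOn_id.const_mul k) (fun z hz => by simp [hk z hz])
    have hk0 := slope_eq_zero_of_periodic (fun z hz => hb hz) hper
    exact ⟨b, fun z hz => by simpa [hk0] using hb hz⟩

lemma norm_mdenom_I_lt_norm_mdenom_two_mul_I {g : Matrix.SpecialLinearGroup (Fin 2) ℝ}
    (hc : g.1 1 0 ≠ 0) : ‖mdenom g I‖ < ‖mdenom g (2 * I)‖ := by
  rw [← sq_lt_sq₀ (norm_nonneg _) (norm_nonneg _), Complex.sq_norm, Complex.sq_norm]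
  simp only [mdenom, normSq_apply, add_re, add_im, mul_re, mul_im, ofReal_re, ofReal_im,
    I_re, I_im, re_ofNat, im_ofNat]
  nlinarith [sq_pos_of_ne_zero hc]

lemma eq_zero_of_mul_mdenom_zpow_eq_one {g : Matrix.SpecialLinearGroup (Fin 2) ℝ}
    (hc : g.1 1 0 ≠ 0) {u : ℂ} {k : ℤ} (h : ∀ z ∈ ℍₒ, u * mdenom g z ^ k = 1) :
    k = 0 := by
  by_contra hk
  have h₁ := h I (by simp)
  have h₂ := h (2 * I) (by simp)
  have hu : u ≠ 0 := left_ne_zero_of_mul_eq_one h₁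
  have heq := congrArg norm (mul_left_cancel₀ hu (h₁.trans h₂.symm))
  rw [norm_zpow, norm_zpow, zpow_left_inj₀ (norm_nonneg _) (norm_nonneg _) hk] at heq
  exact (norm_mdenom_I_lt_norm_mdenom_two_mul_I hc).ne heq

/-- Bol's identity: for `r ∈ ℤ`, `r ≥ 2`, every holomorphic `F₀` on ℍ
and `g ∈ SL₂(ℝ)`, `∂_z^(r-1) (F₀|_{2-r} g) = (∂_z^(r-1) F₀)|_r g`.  Consequently,
for a group `Γ` (here containing the translation `T = [[1,1],[0,1]]` and some element
with nonzero lower-left entry, as holds for any cofinite group with a cusp at `∞`),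
`F ↦ c_r ∂_z^(r-1) F` with `c_r = i/(2(r-1)!)` maps `A_{2-r}(Γ,v)` into `A_r(Γ,v)`,
and its kernel consists of the automorphic polynomials of degree ≤ r-2: the constants
when `r = 2` and `v` is trivial, and `0` otherwise. -/
theorem bol_identity_and_consequence (r : ℤ) (hr : 2 ≤ r)
    (Γ : Subgroup (Matrix.SpecialLinearGroup (Fin 2) ℝ))
    (v : Matrix.SpecialLinearGroup (Fin 2) ℝ → ℂ)
    (F : ℂ → ℂ) (hF : DifferentiableOn ℂ F {z : ℂ | 0 < z.im})
    (hauto : ∀ γ ∈ Γ, ∀ z : ℂ, 0 < z.im →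
        F (mact γ z) = v γ * (mdenom γ z) ^ ((2 : ℤ) - r) * F z)
    (hT : ∃ γT : Matrix.SpecialLinearGroup (Fin 2) ℝ, γT ∈ Γ ∧
        γT.1 0 0 = 1 ∧ γT.1 0 1 = 1 ∧ γT.1 1 0 = 0 ∧ γT.1 1 1 = 1)
    (hhyp : ∃ γ₀ ∈ Γ, (γ₀ : Matrix.SpecialLinearGroup (Fin 2) ℝ).1 1 0 ≠ 0) :
    (∀ F₀ : ℂ → ℂ, DifferentiableOn ℂ F₀ {z : ℂ | 0 < z.im} →
        ∀ g : Matrix.SpecialLinearGroup (Fin 2) ℝ, ∀ z : ℂ, 0 < z.im →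
          iteratedDeriv (r - 1).toNat
              (fun w => (mdenom g w) ^ (r - 2) * F₀ (mact g w)) z =
            (mdenom g z) ^ (-r) * iteratedDeriv (r - 1).toNat F₀ (mact g z)) ∧
    (DifferentiableOn ℂ
        (fun z => Complex.I / (2 * ((r - 1).toNat.factorial : ℂ)) *
          iteratedDeriv (r - 1).toNat F z) {z : ℂ | 0 < z.im} ∧
      ∀ γ ∈ Γ, ∀ z : ℂ, 0 < z.im →
        Complex.I / (2 * ((r - 1).toNat.factorial : ℂ)) *
            iteratedDeriv (r - 1).toNat F (mact γ z) =
          v γ * (mdenom γ z) ^ r *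
            (Complex.I / (2 * ((r - 1).toNat.factorial : ℂ)) *
              iteratedDeriv (r - 1).toNat F z)) ∧
    ((∀ z : ℂ, 0 < z.im → iteratedDeriv (r - 1).toNat F z = 0) →
      ((r = 2 ∧ ∀ γ ∈ Γ, v γ = 1) → ∃ c : ℂ, ∀ z : ℂ, 0 < z.im → F z = c) ∧
      (¬ (r = 2 ∧ ∀ γ ∈ Γ, v γ = 1) → ∀ z : ℂ, 0 < z.im → F z = 0)) := by
  obtain ⟨n, rfl⟩ : ∃ n : ℕ, r = n + 1 := ⟨(r - 1).toNat, by omega⟩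
  rw [show ((n : ℤ) + 1 - 1).toNat = n by omega]
  have hweight : (2 : ℤ) - (n + 1) = 1 - n := by ring
  refine ⟨fun F₀ hF₀ g z hz => ?_, ⟨?_, fun γ hγ z hz => ?_⟩, fun hker => ?_⟩
  · convert iteratedDeriv_mslash n g hF₀ hz using 2
    · ext w
      rw [mslash]
      ring_nf
    · rfl
  · exact (hF.iteratedDeriv UpperHalfPlane.isOpen_upperHalfPlaneSet n).const_mul _
  · rw [iteratedDeriv_comp_mact_of_automorphic n hF
      (fun w hw => hweight ▸ hauto γ hγ w hw) hz]
    ring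
  obtain ⟨T, hT, h00, h01, h10, h11⟩ := hT
  obtain ⟨c, hc⟩ := exists_eq_const_of_iteratedDeriv_eq_zero_of_periodic n hF hker
    (u := v T) fun z hz => by simpa [mact, mdenom, h00, h01, h10, h11] using hauto T hT z hz
  refine ⟨fun _ => ⟨c, hc⟩, fun hnontriv z hz => ?_⟩
  rw [hc z hz]
  by_contra hc0
  have hfactor : ∀ γ ∈ Γ, ∀ z ∈ ℍₒ, v γ * mdenom γ z ^ (2 - (n + 1) : ℤ) = 1 := by
    intro γ hγ z hz
    have h := hauto γ hγ z hz
    rw [hc _ (im_mact_pos γ hz), hc z hz] at h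
    exact mul_right_cancel₀ hc0 (by linear_combination -h)
  obtain ⟨γ₀, hγ₀, hc₀⟩ := hhyp
  have hr2 := eq_zero_of_mul_mdenom_zpow_eq_one hc₀ (hfactor γ₀ hγ₀)
  exact hnontriv ⟨by omega, fun γ hγ => by simpa [hr2] using hfactor γ hγ I (by simp)⟩
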